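/- Let A and B be positive compact operators on a separable Hilbert space with A + B ∈ L_{1,∞} (i.e., μ(k, A+B) = O(1/(k+1))). Then for every n ≥ 0, 0 ≤ ∑_{k=0}^n (μ(k,A) + μ(k,B)) − ∑_{k=0}^n μ(k, A+B) ≤ C, where C = ‖A+B‖_{1,∞}·(1 + log 2) (any constant independent of n suffices). Consequently, for any extended limit ω on ℓ_∞, the Dixmier functional Tr_ω(T) := ω({(log(2+n))^{-1} ∑_{k=0}^n μ(k,T)}_n) is additive on the positive cone of L_{1,∞}. -/

import Mathlib

/-!
The gap `∑_{k≤n} (μ(k,A) + μ(k,B)) − ∑_{k≤n} μ(k,A+B)` is nonnegative by the first standard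
inequality, and by the second it is at most the block `∑_{k=n+1}^{2n+1} μ(k,A+B)` of `n+1` terms,
each at most `‖A+B‖_{1,∞}/(n+2)`. Divided by `log (2+n)` the gap tends to `0`, and an extended
limit vanishes on sequences tending to `0`.
-/

open scoped ENNReal
open Filter

/-- Approximation-number definition of the `k`-th singular value of an operator. -/
noncomputable def singVal {H : Type*} [NormedAddCommGroup H] [InnerProductSpace ℂ H]
    (k : ℕ) (T : H →L[ℂ] H) : ℝ :=
  sInf {c : ℝ | ∃ R : H →L[ℂ] H, Module.rank ℂ (LinearMap.range (R : H →ₗ[ℂ] H)) ≤ (k : Cardinal) ∧ c = ‖T - R‖}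

/-- The `L_{1,∞}` quasi-norm `‖T‖_{1,∞} = sup_k (k+1) μ(k,T)`, valued in `ℝ≥0∞`. -/
noncomputable def norm1inf {H : Type*} [NormedAddCommGroup H] [InnerProductSpace ℂ H]
    (T : H →L[ℂ] H) : ℝ≥0∞ :=
  ⨆ k : ℕ, ENNReal.ofReal (((k : ℝ) + 1) * singVal k T)

open Topology Finset

lemma singVal_nonneg {H : Type*} [NormedAddCommGroup H] [InnerProductSpace ℂ H]
    (k : ℕ) (T : H →L[ℂ] H) : 0 ≤ singVal k T := by
  apply Real.sInf_nonneg
  rintro c ⟨R, -, rfl⟩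
  exact norm_nonneg _

lemma mul_singVal_le_toReal_norm1inf {H : Type*} [NormedAddCommGroup H] [InnerProductSpace ℂ H]
    {T : H →L[ℂ] H} (hT : norm1inf T ≠ ⊤) (k : ℕ) :
    ((k : ℝ) + 1) * singVal k T ≤ (norm1inf T).toReal := by
  have h := ENNReal.toReal_mono hT
    (le_iSup (fun k : ℕ => ENNReal.ofReal (((k : ℝ) + 1) * singVal k T)) k)
  rwa [ENNReal.toReal_ofReal (mul_nonneg (by positivity) (singVal_nonneg k T))] at h

lemma sum_range_add_le_of_mul_le {s : ℕ → ℝ} {M : ℝ} (hs0 : ∀ k, 0 ≤ s k)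
    (hs : ∀ k : ℕ, ((k : ℝ) + 1) * s k ≤ M) (n : ℕ) :
    ∑ k ∈ range (n + 1), s (n + 1 + k) ≤ M := by
  have hM : 0 ≤ M := by simpa using (hs0 0).trans (by simpa using hs 0)
  have hterm : ∀ k ∈ range (n + 1), s (n + 1 + k) ≤ M / ((n : ℝ) + 2) := by
    intro k _
    rw [le_div_iff₀ (by positivity), mul_comm]
    calc ((n : ℝ) + 2) * s (n + 1 + k)
        ≤ (((n + 1 + k : ℕ) : ℝ) + 1) * s (n + 1 + k) := by
          refine mul_le_mul_of_nonneg_right ?_ (hs0 _)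
          push_cast; linarith [(k.cast_nonneg : (0 : ℝ) ≤ k)]
      _ ≤ M := hs _
  calc ∑ k ∈ range (n + 1), s (n + 1 + k)
      ≤ ∑ _k ∈ range (n + 1), M / ((n : ℝ) + 2) := sum_le_sum hterm
    _ = ((n : ℝ) + 1) / ((n : ℝ) + 2) * M := by
        rw [sum_const, card_range, nsmul_eq_mul]; push_cast; ring
    _ ≤ 1 * M := by gcongr; rw [div_le_one₀ (by positivity)]; linarith
    _ = M := one_mul M

lemma tendsto_inv_log_two_add_mul_of_bounded {d : ℕ → ℝ} {C : ℝ} (hd0 : ∀ n, 0 ≤ d n)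
    (hdC : ∀ n, d n ≤ C) :
    Tendsto (fun n : ℕ => (Real.log (2 + n))⁻¹ * d n) atTop (𝓝 0) := by
  have hlog : Tendsto (fun n : ℕ => Real.log (2 + n)) atTop atTop :=
    Real.tendsto_log_atTop.comp (tendsto_atTop_add_const_left _ 2 tendsto_natCast_atTop_atTop)
  have hlog0 : ∀ n : ℕ, 0 ≤ (Real.log (2 + n))⁻¹ :=
    fun n => inv_nonneg.2 (Real.log_nonneg (by linarith [(n.cast_nonneg : (0 : ℝ) ≤ n)]))
  refine squeeze_zero (fun n => mul_nonneg (hlog0 n) (hd0 n))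
    (fun n => mul_le_mul_of_nonneg_left (hdC n) (hlog0 n)) ?_
  simpa using hlog.inv_tendsto_atTop.mul_const C

lemma eq_add_of_tendsto_add_sub_zero {ω : lp (fun _ : ℕ => ℝ) ⊤ →L[ℝ] ℝ}
    (hω : ∀ (x : lp (fun _ : ℕ => ℝ) ⊤) (l : ℝ),
      Tendsto (fun n => (x : ∀ _ : ℕ, ℝ) n) atTop (𝓝 l) → ω x = l)
    {u v w : lp (fun _ : ℕ => ℝ) ⊤}
    (h : Tendsto (fun n => (u : ∀ _ : ℕ, ℝ) n + (v : ∀ _ : ℕ, ℝ) n - (w : ∀ _ : ℕ, ℝ) n)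
      atTop (𝓝 0)) :
    ω w = ω u + ω v := by
  have h0 : ω (u + v - w) = 0 := hω _ 0 (by simpa using h)
  rw [map_sub, map_add] at h0
  linarith

theorem stmt_2_general {H : Type*} [NormedAddCommGroup H] [InnerProductSpace ℂ H]
    (A B : H →L[ℂ] H)
    (hL : norm1inf (A + B) ≠ ⊤)
    (hstd : ∀ n : ℕ,
      (∑ k ∈ Finset.range (n + 1), singVal k (A + B) ≤
        ∑ k ∈ Finset.range (n + 1), (singVal k A + singVal k B)) ∧
      ∑ k ∈ Finset.range (n + 1), (singVal k A + singVal k B) ≤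
        ∑ k ∈ Finset.range (2 * n + 2), singVal k (A + B)) :
    (∃ C : ℝ, ∀ n : ℕ,
        0 ≤ (∑ k ∈ Finset.range (n + 1), (singVal k A + singVal k B)) -
            ∑ k ∈ Finset.range (n + 1), singVal k (A + B) ∧
        (∑ k ∈ Finset.range (n + 1), (singVal k A + singVal k B)) -
            ∑ k ∈ Finset.range (n + 1), singVal k (A + B) ≤ C) ∧
    ∀ ω : lp (fun _ : ℕ => ℝ) ⊤ →L[ℝ] ℝ,
      (∀ (x : lp (fun _ : ℕ => ℝ) ⊤) (l : ℝ),
        Tendsto (fun n => (x : ∀ _ : ℕ, ℝ) n) atTop (nhds l) → ω x = l) →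
      ∀ u v w : lp (fun _ : ℕ => ℝ) ⊤,
        (∀ n : ℕ, (u : ∀ _ : ℕ, ℝ) n =
          (Real.log (2 + n))⁻¹ * ∑ k ∈ Finset.range (n + 1), singVal k A) →
        (∀ n : ℕ, (v : ∀ _ : ℕ, ℝ) n =
          (Real.log (2 + n))⁻¹ * ∑ k ∈ Finset.range (n + 1), singVal k B) →
        (∀ n : ℕ, (w : ∀ _ : ℕ, ℝ) n =
          (Real.log (2 + n))⁻¹ * ∑ k ∈ Finset.range (n + 1), singVal k (A + B)) →
        ω w = ω u + ω v := by
  have hgap : ∀ n : ℕ,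
      0 ≤ (∑ k ∈ range (n + 1), (singVal k A + singVal k B)) -
          ∑ k ∈ range (n + 1), singVal k (A + B) ∧
      (∑ k ∈ range (n + 1), (singVal k A + singVal k B)) -
          ∑ k ∈ range (n + 1), singVal k (A + B) ≤ (norm1inf (A + B)).toReal := by
    intro n
    have htail := sum_range_add_le_of_mul_le (fun k => singVal_nonneg k (A + B))
      (mul_singVal_le_toReal_norm1inf hL) n
    have hupper := (hstd n).2
    rw [show 2 * n + 2 = (n + 1) + (n + 1) by ring, sum_range_add _ (n + 1) (n + 1)] at hupper
    exact ⟨sub_nonneg.2 (hstd n).1, by linarith⟩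
  refine ⟨⟨_, hgap⟩, fun ω hω u v w hu hv hw => eq_add_of_tendsto_add_sub_zero hω ?_⟩
  convert tendsto_inv_log_two_add_mul_of_bounded (fun n => (hgap n).1) (fun n => (hgap n).2)
    using 2 with n
  rw [hu, hv, hw, sum_add_distrib]
  ring

/-- Let `A, B` be positive compact operators with `A + B ∈ L_{1,∞}`. Then (assuming the
standard singular value inequalities) the differences
`∑_{k≤n}(μ(k,A)+μ(k,B)) − ∑_{k≤n} μ(k,A+B)` are nonnegative and uniformly bounded;
consequently, for every extended limit `ω` on `ℓ_∞` the Dixmier functional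
`Tr_ω(T) = ω({(log(2+n))⁻¹ ∑_{k≤n} μ(k,T)}_n)` is additive: `Tr_ω(A+B) = Tr_ω(A)+Tr_ω(B)`. -/
theorem stmt_2 {H : Type*} [NormedAddCommGroup H] [InnerProductSpace ℂ H] [CompleteSpace H]
    [TopologicalSpace.SeparableSpace H]
    (A B : H →L[ℂ] H) (hA : A.IsPositive) (hB : B.IsPositive)
    (hAc : IsCompactOperator ⇑A) (hBc : IsCompactOperator ⇑B)
    (hL : norm1inf (A + B) ≠ ⊤)
    (hstd : ∀ n : ℕ,
      (∑ k ∈ Finset.range (n + 1), singVal k (A + B) ≤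
        ∑ k ∈ Finset.range (n + 1), (singVal k A + singVal k B)) ∧
      ∑ k ∈ Finset.range (n + 1), (singVal k A + singVal k B) ≤
        ∑ k ∈ Finset.range (2 * n + 2), singVal k (A + B)) :
    (∃ C : ℝ, ∀ n : ℕ,
        0 ≤ (∑ k ∈ Finset.range (n + 1), (singVal k A + singVal k B)) -
            ∑ k ∈ Finset.range (n + 1), singVal k (A + B) ∧
        (∑ k ∈ Finset.range (n + 1), (singVal k A + singVal k B)) -
            ∑ k ∈ Finset.range (n + 1), singVal k (A + B) ≤ C) ∧
    ∀ ω : lp (fun _ : ℕ => ℝ) ⊤ →L[ℝ] ℝ,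
      (∀ (x : lp (fun _ : ℕ => ℝ) ⊤) (l : ℝ),
        Tendsto (fun n => (x : ∀ _ : ℕ, ℝ) n) atTop (nhds l) → ω x = l) →
      ∀ u v w : lp (fun _ : ℕ => ℝ) ⊤,
        (∀ n : ℕ, (u : ∀ _ : ℕ, ℝ) n =
          (Real.log (2 + n))⁻¹ * ∑ k ∈ Finset.range (n + 1), singVal k A) →
        (∀ n : ℕ, (v : ∀ _ : ℕ, ℝ) n =
          (Real.log (2 + n))⁻¹ * ∑ k ∈ Finset.range (n + 1), singVal k B) →
        (∀ n : ℕ, (w : ∀ _ : ℕ, ℝ) n =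
          (Real.log (2 + n))⁻¹ * ∑ k ∈ Finset.range (n + 1), singVal k (A + B)) →
        ω w = ω u + ω v :=
  stmt_2_general A B hL hstd
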